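/- Let G be a graph with m edges. Then the energy E of G satisfies E ≥ 2√m. -/

import Mathlib

/-!
The eigenvalues `λᵢ` of the adjacency matrix satisfy `∑ λᵢ = tr A = 0` and
`∑ λᵢ² = tr A² = ∑ deg v = 2m`. Expanding `(∑ λᵢ)² = 0` shows that the off-diagonal products
`∑_{i ≠ j} λᵢ λⱼ` equal `-2m`, so `E² = ∑ λᵢ² + ∑_{i ≠ j} |λᵢ| |λⱼ| ≥ 2m + 2m`.
-/

open Finset Matrix

theorem Finset.sq_sum_eq_sum_sq_add_sum_sum_erase {ι R : Type*} [DecidableEq ι] [CommSemiring R]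
    (s : Finset ι) (f : ι → R) :
    (∑ i ∈ s, f i) ^ 2 = ∑ i ∈ s, f i ^ 2 + ∑ i ∈ s, ∑ j ∈ s.erase i, f i * f j := by
  rw [sq, sum_mul_sum, ← sum_add_distrib]
  refine sum_congr rfl fun i hi => ?_
  rw [← add_sum_erase s _ hi, sq]

theorem Finset.two_mul_sum_sq_le_sq_sum_abs {ι : Type*} (s : Finset ι) (x : ι → ℝ)
    (hx : ∑ i ∈ s, x i = 0) :
    2 * ∑ i ∈ s, x i ^ 2 ≤ (∑ i ∈ s, |x i|) ^ 2 := by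
  classical
  have hexpand := s.sq_sum_eq_sum_sq_add_sum_sum_erase x
  have hexpand_abs := s.sq_sum_eq_sum_sq_add_sum_sum_erase fun i => |x i|
  simp only [sq_abs] at hexpand_abs
  have hcross : |∑ i ∈ s, ∑ j ∈ s.erase i, x i * x j|
      ≤ ∑ i ∈ s, ∑ j ∈ s.erase i, |x i| * |x j| := by
    refine (abs_sum_le_sum_abs _ _).trans (sum_le_sum fun i _ => ?_)
    exact (abs_sum_le_sum_abs _ _).trans_eq (sum_congr rfl fun j _ => abs_mul _ _)
  rw [hx] at hexpand
  linarith [neg_abs_le (∑ i ∈ s, ∑ j ∈ s.erase i, x i * x j)]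

theorem Matrix.IsHermitian.trace_mul_self_eq_sum_sq_eigenvalues {𝕜 n : Type*} [RCLike 𝕜]
    [Fintype n] [DecidableEq n] {A : Matrix n n 𝕜} (hA : A.IsHermitian) :
    (A * A).trace = ∑ i, (hA.eigenvalues i : 𝕜) ^ 2 := by
  conv_lhs => rw [hA.spectral_theorem, ← map_mul]
  rw [Unitary.conjStarAlgAut_apply, trace_mul_cycle, Unitary.coe_star_mul_self, one_mul,
    diagonal_mul_diagonal, trace_diagonal]
  simp [sq]

namespace SimpleGraph

variable {V : Type*} [Fintype V] (G : SimpleGraph V) [DecidableRel G.Adj]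

theorem trace_adjMatrix_mul_self (R : Type*) [NonAssocSemiring R] :
    (G.adjMatrix R * G.adjMatrix R).trace = 2 * #G.edgeFinset := by
  simp only [trace, diag_apply, adjMatrix_mul_self_apply_self]
  rw [← Nat.cast_sum, G.sum_degrees_eq_twice_card_edges, Nat.cast_mul, Nat.cast_ofNat]

theorem sum_eigenvalues_adjMatrix [DecidableEq V] (hA : (G.adjMatrix ℝ).IsHermitian) :
    ∑ i, hA.eigenvalues i = 0 := by
  simpa using hA.trace_eq_sum_eigenvalues.symm.trans (G.trace_adjMatrix ℝ)

theorem sum_sq_eigenvalues_adjMatrix [DecidableEq V] (hA : (G.adjMatrix ℝ).IsHermitian) :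
    ∑ i, hA.eigenvalues i ^ 2 = 2 * #G.edgeFinset := by
  simpa using hA.trace_mul_self_eq_sum_sq_eigenvalues.symm.trans (G.trace_adjMatrix_mul_self ℝ)

end SimpleGraph

theorem caporossi_lower_bound {V : Type*} [Fintype V] [DecidableEq V]
    (G : SimpleGraph V) [DecidableRel G.Adj]
    (hA : (G.adjMatrix ℝ).IsHermitian) :
    (∑ i, |hA.eigenvalues i|) ≥ 2 * Real.sqrt G.edgeFinset.card := by
  refine le_of_sq_le_sq ?_ (sum_nonneg fun i _ => abs_nonneg _)
  rw [mul_pow, Real.sq_sqrt (Nat.cast_nonneg _)]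
  linarith [univ.two_mul_sum_sq_le_sq_sum_abs _ (G.sum_eigenvalues_adjMatrix hA),
    G.sum_sq_eigenvalues_adjMatrix hA]
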